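/- Conversely, if x and y are irrational reals whose derivative sequences satisfy x_i = y_j for some nonnegative integers i, j, then there is M ∈ GL(2,ℤ) with M·x = y; explicitly M = g_{y₀}·g_{y₁}·…·g_{y_{j-1}}·(g_{x₀}·g_{x₁}·…·g_{x_{i-1}})⁻¹, where g_z := [[⌊z⌋,1],[1,0]]. -/

import Mathlib

/-!
`g_z` sends `z' = cfShift z` back to `z`, so by induction `gProd x i` sends `x_i` back to `x`.
Hence `M = gProd y j * (gProd x i)⁻¹` sends `x` to `x_i = y_j` and then to `y`. Irrationality
keeps every denominator nonzero along the way.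
-/

noncomputable def cfShift (x : ℝ) : ℝ := 1 / (x - ⌊x⌋)

/-- The matrix `g_z = [[⌊z⌋, 1], [1, 0]]`. -/
noncomputable def gMat (z : ℝ) : Matrix (Fin 2) (Fin 2) ℤ := !![⌊z⌋, 1; 1, 0]

/-- Product `g_{x₀} · g_{x₁} · … · g_{x_{i-1}}` along the derivative sequence of `x`. -/
noncomputable def gProd (x : ℝ) (i : ℕ) : Matrix (Fin 2) (Fin 2) ℤ :=
  ((List.range i).map fun k => gMat (cfShift^[k] x)).prod

noncomputable def mobius (A : Matrix (Fin 2) (Fin 2) ℤ) (x : ℝ) : ℝ :=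
  ((A 0 0 : ℝ) * x + A 0 1) / ((A 1 0 : ℝ) * x + A 1 1)

theorem irrational_cfShift {x : ℝ} (hx : Irrational x) : Irrational (cfShift x) := by
  simpa [cfShift] using (hx.sub_intCast ⌊x⌋).inv

theorem irrational_cfShift_iterate {x : ℝ} (hx : Irrational x) (k : ℕ) :
    Irrational (cfShift^[k] x) := by
  induction k with
  | zero => exact hx
  | succ n ih => rw [Function.iterate_succ_apply']; exact irrational_cfShift ih

theorem mobius_denom_ne_zero {A : Matrix (Fin 2) (Fin 2) ℤ} (hA : A.det ≠ 0) {x : ℝ}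
    (hx : Irrational x) : (A 1 0 : ℝ) * x + A 1 1 ≠ 0 := by
  rcases eq_or_ne (A 1 0) 0 with h10 | h10
  · have h11 : A 1 1 ≠ 0 := by
      rintro h11
      exact hA (by rw [Matrix.det_fin_two, h10, h11]; ring)
    simpa [h10] using h11
  · exact ((hx.intCast_mul h10).add_intCast (A 1 1)).ne_zero

theorem mobius_mul (A B : Matrix (Fin 2) (Fin 2) ℤ) {x : ℝ}
    (hx : (B 1 0 : ℝ) * x + B 1 1 ≠ 0) : mobius (A * B) x = mobius A (mobius B x) := by
  simp only [mobius, Matrix.mul_apply, Fin.sum_univ_two, Int.cast_add, Int.cast_mul]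
  rw [← div_div_div_cancel_right₀ hx]
  congr 1 <;> field_simp <;> ring

theorem mobius_gMat_cfShift {z : ℝ} (hz : Irrational z) : mobius (gMat z) (cfShift z) = z := by
  have hfract : Int.fract z ≠ 0 := (hz.sub_intCast ⌊z⌋).ne_zero
  simp only [mobius, gMat, cfShift, Matrix.of_apply, Matrix.cons_val', Matrix.cons_val_zero,
    Matrix.cons_val_one, Matrix.empty_val', Matrix.cons_val_fin_one]
  rw [← Int.fract]
  field_simp
  simp

theorem det_gMat (z : ℝ) : (gMat z).det = -1 := by
  simp [gMat, Matrix.det_fin_two_of]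

theorem gProd_succ (x : ℝ) (n : ℕ) : gProd x (n + 1) = gProd x n * gMat (cfShift^[n] x) := by
  simp [gProd, List.range_succ]

theorem det_gProd (x : ℝ) (i : ℕ) : (gProd x i).det = (-1) ^ i := by
  induction i with
  | zero => simp [gProd]
  | succ n ih => rw [gProd_succ, Matrix.det_mul, ih, det_gMat, pow_succ]

theorem mobius_gProd_iterate {x : ℝ} (hx : Irrational x) (i : ℕ) :
    mobius (gProd x i) (cfShift^[i] x) = x := by
  induction i with
  | zero => simp [gProd, mobius]
  | succ n ih =>
    have hxn := irrational_cfShift_iterate hx n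
    have hdet : (gMat (cfShift^[n] x)).det ≠ 0 := by rw [det_gMat]; norm_num
    rw [gProd_succ, Function.iterate_succ_apply',
      mobius_mul _ _ (mobius_denom_ne_zero hdet (irrational_cfShift hxn)),
      mobius_gMat_cfShift hxn, ih]

theorem common_tail_implies_equivalent (x y : ℝ) (hx : Irrational x) (hy : Irrational y)
    (i j : ℕ) (h : cfShift^[i] x = cfShift^[j] y) :
    ∃ M : Matrix (Fin 2) (Fin 2) ℤ,
      (M.det = 1 ∨ M.det = -1) ∧
      M * gProd x i = gProd y j ∧
      ((M 0 0 : ℝ) * x + M 0 1) / ((M 1 0 : ℝ) * x + M 1 1) = y := by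
  set P := gProd x i
  set Q := gProd y j
  have hP : IsUnit P.det := by rw [det_gProd]; exact isUnit_one.neg.pow i
  have hQ : IsUnit Q.det := by rw [det_gProd]; exact isUnit_one.neg.pow j
  have hMP : Q * P⁻¹ * P = Q := by rw [mul_assoc, Matrix.nonsing_inv_mul _ hP, mul_one]
  refine ⟨Q * P⁻¹, ?_, hMP, ?_⟩
  · rw [← Int.isUnit_iff]
    exact isUnit_of_mul_isUnit_left (by rwa [← Matrix.det_mul, hMP])
  · change mobius (Q * P⁻¹) x = y
    calc mobius (Q * P⁻¹) x = mobius (Q * P⁻¹) (mobius P (cfShift^[i] x)) := by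
          rw [mobius_gProd_iterate hx]
      _ = mobius Q (cfShift^[j] y) := by
          rw [← mobius_mul _ _ (mobius_denom_ne_zero hP.ne_zero (irrational_cfShift_iterate hx i)),
            hMP, h]
      _ = y := mobius_gProd_iterate hy j
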